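/- Let G be a group. If the quotient G/Z(G) of G by its center is polycyclic, then the commutator subgroup [G, G] is polycyclic. -/

import Mathlib

def IsNoetherianGroup (G : Type*) [Group G] : Prop := ∀ K : Subgroup G, K.FG

def IsPolycyclic (G : Type*) [Group G] : Prop := IsSolvable G ∧ IsNoetherianGroup G

/-!
More generally, `[G, G]` is polycyclic whenever some `f : G →* Q` with central kernel has
polycyclic target; induct on the derived length of `Q`. Put `H = f⁻¹([Q, Q])`: the restriction
`H →* [Q, Q]` again has central kernel, so `[H, H]` is polycyclic by induction, and it remains
to show that `[G, G] / [H, H]` is polycyclic.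

In `Ḡ = G ⧸ [H, H]` the image `M` of `H` is an abelian normal subgroup containing `[Ḡ, Ḡ]`.
As `Q` is Noetherian, `Ḡ` is generated by a finite set `T` together with the centre, and `M`
by a finite set `S ⊆ M` together with the centre. For fixed `t`, the map `m ↦ ⁅t, m⁆` is
multiplicative on `M` and kills central elements, so the finitely many commutators `⁅t, x⁆`
(`t ∈ T`, `x ∈ T ∪ S`) generate a normal subgroup, which then contains `[Ḡ, Ḡ]`. Hence
`[Ḡ, Ḡ]` is a finitely generated abelian group.
-/

open Subgroup
open scoped commutatorElement

namespace Subgroup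

variable {G H : Type*} [Group G] [Group H]

theorem FG.map {K : Subgroup G} (hK : K.FG) (f : G →* H) : (K.map f).FG := by
  obtain ⟨S, rfl, hS⟩ := (fg_iff K).1 hK
  exact (fg_iff _).2 ⟨f '' S, (MonoidHom.map_closure f S).symm, hS.image f⟩

theorem exists_finite_subset_map_closure_eq {f : G →* H} {K : Subgroup G} (hK : (K.map f).FG) :
    ∃ S ⊆ (K : Set G), S.Finite ∧ (closure S).map f = K.map f := by
  obtain ⟨S', hS', hS'fin⟩ := (fg_iff _).1 hK
  have hS'K : S' ⊆ f '' K := by rw [← coe_map, ← hS']; exact subset_closure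
  obtain ⟨S, hSK, hSfin, hS⟩ :=
    Set.exists_subset_image_finite_and (p := fun t => closure t = K.map f) |>.1
      ⟨S', hS'K, hS'fin, hS'⟩
  exact ⟨S, hSK, hSfin, by rw [MonoidHom.map_closure, hS]⟩

theorem le_sup_inf_ker_of_map_le {f : G →* H} {K L : Subgroup G} (hLK : L ≤ K)
    (h : K.map f ≤ L.map f) : K ≤ L ⊔ (K ⊓ f.ker) := by
  intro k hk
  obtain ⟨w, hw, hwk⟩ := h ⟨k, hk, rfl⟩
  have hwk' : w⁻¹ * k ∈ K ⊓ f.ker := ⟨K.mul_mem (K.inv_mem (hLK hw)) hk, by simp [hwk]⟩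
  simpa using mul_mem_sup hw hwk'

theorem fg_of_fg_map_of_fg_inf_ker {f : G →* H} {K : Subgroup G} (hmap : (K.map f).FG)
    (hker : (K ⊓ f.ker).FG) : K.FG := by
  obtain ⟨S, hSK, hSfin, hS⟩ := exists_finite_subset_map_closure_eq hmap
  have hK : K = closure S ⊔ (K ⊓ f.ker) :=
    le_antisymm (le_sup_inf_ker_of_map_le ((closure_le K).2 hSK) hS.ge)
      (sup_le ((closure_le K).2 hSK) inf_le_left)
  rw [hK]
  exact ((fg_iff _).2 ⟨S, rfl, hSfin⟩).sup hker

theorem map_center_le_center {f : G →* H} (hf : Function.Surjective f) :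
    (center G).map f ≤ center H := by
  rintro _ ⟨z, hz, rfl⟩
  rw [mem_center_iff]
  intro h
  obtain ⟨g, rfl⟩ := hf h
  rw [← map_mul, ← map_mul, mem_center_iff.1 hz g]

end Subgroup

namespace IsNoetherianGroup

variable {G H : Type*} [Group G] [Group H]

theorem of_injective {f : G →* H} (hf : Function.Injective f) (hH : IsNoetherianGroup H) :
    IsNoetherianGroup G := fun K => by
  have := (Group.fg_iff_subgroup_fg _).2 (hH (K.map f))
  exact (Group.fg_iff_subgroup_fg K).1
    (Group.fg_of_surjective (f := (K.equivMapOfInjective f hf).symm.toMonoidHom)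
      (K.equivMapOfInjective f hf).symm.surjective)

theorem of_surjective {f : G →* H} (hf : Function.Surjective f) (hG : IsNoetherianGroup G) :
    IsNoetherianGroup H := fun K => by
  simpa [map_comap_eq_self_of_surjective hf] using (hG (K.comap f)).map f

theorem of_ker_le_range {G₁ G₂ G₃ : Type*} [Group G₁] [Group G₂] [Group G₃] (f : G₁ →* G₂)
    (g : G₂ →* G₃) (hfg : g.ker ≤ f.range) (h₁ : IsNoetherianGroup G₁)
    (h₃ : IsNoetherianGroup G₃) : IsNoetherianGroup G₂ := fun K => by
  refine fg_of_fg_map_of_fg_inf_ker (h₃ (K.map g)) ?_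
  simpa [map_comap_eq_self (inf_le_right.trans hfg)] using (h₁ ((K ⊓ g.ker).comap f)).map f

open scoped IsMulCommutative in
theorem of_isMulCommutative [IsMulCommutative G] [Group.FG G] : IsNoetherianGroup G := by
  intro K
  have : Module.Finite ℤ (Additive G) :=
    Module.Finite.iff_addGroup_fg.2 (GroupFG.iff_add_fg.1 ‹_›)
  rw [fg_iff_add_fg, ← AddSubgroup.toIntSubmodule_toAddSubgroup K.toAddSubgroup,
    ← Submodule.fg_iff_addSubgroup_fg]
  exact IsNoetherian.noetherian _

end IsNoetherianGroup

namespace IsPolycyclic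

variable {G H : Type*} [Group G] [Group H]

theorem of_surjective {f : G →* H} (hf : Function.Surjective f) (hG : IsPolycyclic G) :
    IsPolycyclic H :=
  ⟨by have : Group.IsSolvable G := hG.1; exact Group.isSolvable_of_surjective hf,
    hG.2.of_surjective hf⟩

theorem of_ker_le_range {G₁ G₂ G₃ : Type*} [Group G₁] [Group G₂] [Group G₃] (f : G₁ →* G₂)
    (g : G₂ →* G₃) (hfg : g.ker ≤ f.range) (h₁ : IsPolycyclic G₁) (h₃ : IsPolycyclic G₃) :
    IsPolycyclic G₂ :=
  ⟨by
    have : Group.IsSolvable G₁ := h₁.1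
    have : Group.IsSolvable G₃ := h₃.1
    exact Group.isSolvable_of_ker_le_range f g hfg,
    IsNoetherianGroup.of_ker_le_range f g hfg h₁.2 h₃.2⟩

theorem of_isMulCommutative [IsMulCommutative G] [Group.FG G] : IsPolycyclic G :=
  ⟨Group.isSolvable_of_comm mul_comm', IsNoetherianGroup.of_isMulCommutative⟩

end IsPolycyclic

theorem Subgroup.isPolycyclic_of_fg_of_commutator_eq_bot {G : Type*} [Group G] {K : Subgroup G}
    (hK : K.FG) (hKK : ⁅K, K⁆ = ⊥) : IsPolycyclic K := by
  have := commutator_self_eq_bot_iff.1 hKK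
  have := (Group.fg_iff_subgroup_fg K).2 hK
  exact .of_isMulCommutative

section Commutator

variable {G Q : Type*} [Group G] [Group Q]

theorem commutatorElement_mul_right_of_mem {M : Subgroup G} [M.Normal] (hMM : ⁅M, M⁆ = ⊥)
    (t : G) {x y : G} (hx : x ∈ M) (hy : y ∈ M) : ⁅t, x * y⁆ = ⁅t, x⁆ * ⁅t, y⁆ := by
  have hty : ⁅t, y⁆ ∈ M := commutator_le_right ⊤ M (commutator_mem_commutator (mem_top t) hy)
  have hcomm : x * ⁅t, y⁆ = ⁅t, y⁆ * x := by
    rw [← commutatorElement_eq_one_iff_mul_comm, ← mem_bot, ← hMM]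
    exact commutator_mem_commutator hx hty
  rw [commutatorElement_mul_right_eq_mul_conj, mul_assoc _ x, hcomm, ← mul_assoc,
    mul_inv_cancel_right]

theorem commutatorElement_mul_right_of_mem_center (t c : G) {a : G} (ha : a ∈ center G) :
    ⁅t, c * a⁆ = ⁅t, c⁆ := by
  rw [commutatorElement_mul_right_eq_mul_conj,
    commutatorElement_eq_one_iff_mul_comm.2 (mem_center_iff.1 ha t), mul_one,
    mul_inv_cancel_right]

theorem map_commutator_of_surjective {f : G →* Q} (hf : Function.Surjective f) :
    (commutator G).map f = commutator Q := by
  simpa only [derivedSeries_one] using map_derivedSeries_eq hf 1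

theorem map_subtype_derivedSeries_commutator (n : ℕ) :
    (derivedSeries (commutator G) n).map (commutator G).subtype = derivedSeries G (n + 1) := by
  induction n with
  | zero => rw [derivedSeries_zero, ← MonoidHom.range_eq_map, range_subtype, derivedSeries_one]
  | succ n ih => rw [derivedSeries_succ, map_commutator, ih, ← derivedSeries_succ]

theorem derivedSeries_commutator_eq_bot {n : ℕ} (h : derivedSeries G (n + 1) = ⊥) :
    derivedSeries (commutator G) n = ⊥ := by
  rw [← map_eq_bot_iff_of_injective _ (subtype_injective _),
    map_subtype_derivedSeries_commutator, h]

end Commutator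

section GenerationModuloCenter

variable {G Q : Type*} [Group G] [Group Q]

theorem exists_finite_subset_le_closure_sup_center {f : G →* Q} (hf : f.ker ≤ center G)
    {K : Subgroup G} (hK : (K.map f).FG) :
    ∃ S ⊆ (K : Set G), S.Finite ∧ K ≤ closure S ⊔ center G := by
  obtain ⟨S, hSK, hSfin, hS⟩ := exists_finite_subset_map_closure_eq hK
  exact ⟨S, hSK, hSfin, (map_le_map_iff.1 hS.ge).trans (sup_le_sup_left hf _)⟩

theorem map_le_closure_sup_center {f : G →* Q} (hf : Function.Surjective f) {K : Subgroup G}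
    {S : Set G} (hKS : K ≤ closure S ⊔ center G) :
    K.map f ≤ closure (f '' S) ⊔ center Q :=
  calc K.map f ≤ (closure S ⊔ center G).map f := map_mono hKS
    _ = closure (f '' S) ⊔ (center G).map f := by rw [Subgroup.map_sup, MonoidHom.map_closure]
    _ ≤ closure (f '' S) ⊔ center Q := sup_le_sup_left (map_center_le_center hf) _

theorem isMulCommutative_of_top_le_closure_sup_center {T : Set G}
    (hT : ∀ x ∈ T, ∀ y ∈ T, x * y = y * x) (hTG : ⊤ ≤ closure T ⊔ center G) :
    IsMulCommutative G := by
  rw [← center_eq_top_iff, eq_top_iff]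
  refine hTG.trans (sup_le ((closure_le _).2 fun x hx => mem_center_iff.2 fun g => ?_) le_rfl)
  have hx : closure T ⊔ center G ≤ centralizer {x} :=
    sup_le ((closure_le _).2 fun y hy => mem_centralizer_singleton_iff.2 (hT x hx y hy).symm)
      (center_le_centralizer _)
  exact mem_centralizer_singleton_iff.1 (hx (hTG (mem_top g)))

theorem commutator_le_of_top_le_closure_sup_center {N : Subgroup G} [N.Normal] {T : Set G}
    (hT : ∀ x ∈ T, ∀ y ∈ T, ⁅x, y⁆ ∈ N) (hTG : ⊤ ≤ closure T ⊔ center G) :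
    commutator G ≤ N := by
  set π := QuotientGroup.mk' N
  have hπ : Function.Surjective π := QuotientGroup.mk'_surjective N
  rw [← Normal.quotient_commutative_iff_commutator_le]
  refine isMulCommutative_of_top_le_closure_sup_center (T := π '' T) ?_ ?_
  · rintro _ ⟨x, hx, rfl⟩ _ ⟨y, hy, rfl⟩
    rw [← commutatorElement_eq_one_iff_mul_comm, ← map_commutatorElement,
      QuotientGroup.mk'_apply, QuotientGroup.eq_one_iff]
    exact hT x hx y hy
  · simpa [map_top_of_surjective π hπ] using map_le_closure_sup_center hπ hTG

theorem normal_of_top_le_closure_sup_center {M N : Subgroup G} [hM : M.Normal] (hNM : N ≤ M)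
    {T : Set G} (hTM : ∀ t ∈ T, ∀ m ∈ M, ⁅t, m⁆ ∈ N) (hTG : ⊤ ≤ closure T ⊔ center G) :
    N.Normal := by
  rw [← normalizer_eq_top_iff, eq_top_iff]
  refine hTG.trans (sup_le ((closure_le _).2 fun t ht => mem_normalizer_iff.2 fun n => ?_)
    (center_le_normalizer _))
  have hconj : t * n * t⁻¹ = ⁅t, n⁆ * n := by rw [commutatorElement_def, inv_mul_cancel_right]
  refine ⟨fun hn => hconj ▸ mul_mem (hTM t ht n (hNM hn)) hn, fun hn => ?_⟩
  have hnM : n ∈ M := by simpa [mul_assoc] using hM.conj_mem _ (hNM hn) t⁻¹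
  rw [hconj] at hn
  simpa only [inv_mul_cancel_left] using mul_mem (inv_mem (hTM t ht n hnM)) hn

theorem commutatorElement_mem_of_le_closure_sup_center {M N : Subgroup G} [M.Normal]
    (hMM : ⁅M, M⁆ = ⊥) {S : Set G} (hSM : S ⊆ M) (hMS : M ≤ closure S ⊔ center G) {t : G}
    (htS : ∀ s ∈ S, ⁅t, s⁆ ∈ N) {m : G} (hm : m ∈ M) : ⁅t, m⁆ ∈ N := by
  obtain ⟨c, hc, a, ha, rfl⟩ := mem_sup_of_normal_right.1 (hMS hm)
  rw [commutatorElement_mul_right_of_mem_center t c ha]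
  have hSM' : closure S ≤ M := (closure_le M).2 hSM
  clear hm
  induction hc using closure_induction with
  | mem x hx => exact htS x hx
  | one => rw [commutatorElement_one_right]; exact one_mem N
  | mul x y hx hy ihx ihy =>
    rw [commutatorElement_mul_right_of_mem hMM t (hSM' hx) (hSM' hy)]
    exact mul_mem ihx ihy
  | inv x hx ihx =>
    have hinv := commutatorElement_mul_right_of_mem hMM t (inv_mem (hSM' hx)) (hSM' hx)
    rw [inv_mul_cancel, commutatorElement_one_right] at hinv
    rw [eq_inv_of_mul_eq_one_left hinv.symm]
    exact inv_mem ihx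

theorem commutator_fg_of_top_le_closure_sup_center {M : Subgroup G} [M.Normal]
    (hMM : ⁅M, M⁆ = ⊥) (hGM : commutator G ≤ M) {T S : Set G} (hT : T.Finite) (hS : S.Finite)
    (hSM : S ⊆ M) (hTG : ⊤ ≤ closure T ⊔ center G) (hMS : M ≤ closure S ⊔ center G) :
    (commutator G).FG := by
  set N := closure (Set.image2 (⁅·, ·⁆) T (T ∪ S))
  have hNG : N ≤ commutator G := (closure_le _).2 <| Set.image2_subset_iff.2 fun x _ y _ =>
    commutator_mem_commutator (mem_top x) (mem_top y)
  have hTM : ∀ t ∈ T, ∀ m ∈ M, ⁅t, m⁆ ∈ N := fun t ht _ hm =>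
    commutatorElement_mem_of_le_closure_sup_center (N := N) hMM hSM hMS
      (fun s hs => subset_closure ⟨t, ht, s, Or.inr hs, rfl⟩) hm
  have := normal_of_top_le_closure_sup_center (hNG.trans hGM) hTM hTG
  have hGN : commutator G ≤ N := commutator_le_of_top_le_closure_sup_center
    (fun x hx y hy => subset_closure ⟨x, hx, y, Or.inl hy, rfl⟩) hTG
  exact (fg_iff _).2 ⟨_, le_antisymm hNG hGN, hT.image2 _ (hT.union hS)⟩

end GenerationModuloCenter

section CentralKernel

variable {G Q : Type*} [Group G] [Group Q]

theorem MonoidHom.ker_subgroupComap_le_center {f : G →* Q} (hf : f.ker ≤ center G)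
    (K : Subgroup Q) : (f.subgroupComap K).ker ≤ center (K.comap f) := by
  intro x hx
  rw [mem_center_iff]
  intro y
  exact Subtype.ext (mem_center_iff.1 (hf (congrArg Subtype.val hx)) y)

theorem isPolycyclic_commutator_of_isPolycyclic_commutator_quotient {D : Subgroup G} [D.Normal]
    (hDG : D ≤ commutator G) (hD : IsPolycyclic D) (hGD : IsPolycyclic (commutator (G ⧸ D))) :
    IsPolycyclic (commutator G) := by
  set π := QuotientGroup.mk' D
  rw [← map_commutator_of_surjective (QuotientGroup.mk'_surjective D)] at hGD
  refine IsPolycyclic.of_ker_le_range (inclusion hDG) (π.subgroupMap _) (fun x hx => ?_) hD hGD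
  have hxD : (x : G) ∈ D := (QuotientGroup.eq_one_iff _).1 (congrArg Subtype.val hx)
  exact ⟨⟨x, hxD⟩, rfl⟩

theorem isPolycyclic_commutator_quotient_commutator {f : G →* Q} (hf : f.ker ≤ center G)
    (hQ : IsNoetherianGroup Q) {H : Subgroup G} [hH : H.Normal] (hGH : commutator G ≤ H) :
    IsPolycyclic (commutator (G ⧸ ⁅H, H⁆)) := by
  set π := QuotientGroup.mk' ⁅H, H⁆
  have hπ : Function.Surjective π := QuotientGroup.mk'_surjective _
  have := hH.map π hπ
  obtain ⟨T, -, hT, hTG⟩ :=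
    exists_finite_subset_le_closure_sup_center hf (hQ ((⊤ : Subgroup G).map f))
  obtain ⟨S, hSH, hS, hHS⟩ := exists_finite_subset_le_closure_sup_center hf (hQ (H.map f))
  have hMM : ⁅H.map π, H.map π⁆ = ⊥ := by
    rw [← map_commutator, Subgroup.map_eq_bot_iff, QuotientGroup.ker_mk']
  have hGM : commutator (G ⧸ ⁅H, H⁆) ≤ H.map π := by
    rw [← map_commutator_of_surjective hπ]
    exact map_mono hGH
  refine isPolycyclic_of_fg_of_commutator_eq_bot ?_
    (eq_bot_iff.2 ((commutator_mono hGM hGM).trans hMM.le))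
  refine commutator_fg_of_top_le_closure_sup_center hMM hGM (hT.image π) (hS.image π)
    (coe_map π H ▸ Set.image_mono hSH) ?_ (map_le_closure_sup_center hπ hHS)
  simpa [map_top_of_surjective π hπ] using map_le_closure_sup_center hπ hTG

theorem isPolycyclic_commutator_of_derivedSeries_eq_bot (d : ℕ) (f : G →* Q)
    (hf : f.ker ≤ center G) (hQ : IsNoetherianGroup Q) (hd : derivedSeries Q d = ⊥) :
    IsPolycyclic (commutator G) := by
  induction d generalizing G Q with
  | zero =>
    rw [derivedSeries_zero] at hd
    have hker : f.ker = ⊤ := eq_top_iff.2 fun x _ => mem_bot.1 (hd ▸ mem_top (f x))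
    rw [(commutator_eq_bot_iff_center_eq_top G).2 (top_le_iff.1 (hker ▸ hf))]
    exact isPolycyclic_of_fg_of_commutator_eq_bot FG.bot (commutator_bot_left ⊥)
  | succ d ih =>
    set H := (commutator Q).comap f
    have hHH : IsPolycyclic (commutator H) :=
      ih (f.subgroupComap _) (f.ker_subgroupComap_le_center hf _)
        (hQ.of_injective (subtype_injective _)) (derivedSeries_commutator_eq_bot hd)
    have hGH : commutator G ≤ H := by
      rw [← map_le_iff_le_comap, map_commutator_eq, _root_.commutator_def]
      exact commutator_mono le_top le_top
    refine isPolycyclic_commutator_of_isPolycyclic_commutator_quotient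
      (commutator_mono le_top le_top) ?_ (isPolycyclic_commutator_quotient_commutator hf hQ hGH)
    rw [← map_subtype_commutator]
    exact hHH.of_surjective (H.subtype.subgroupMap_surjective _)

theorem isPolycyclic_commutator_of_ker_le_center (f : G →* Q) (hf : f.ker ≤ center G)
    (hQ : IsPolycyclic Q) : IsPolycyclic (commutator G) :=
  have ⟨d, hd⟩ := (hQ.1 : Group.IsSolvable Q).solvable
  isPolycyclic_commutator_of_derivedSeries_eq_bot d f hf hQ.2 hd

end CentralKernel

theorem commutator_polycyclic_of_polycyclic_quotient_center
    {G : Type*} [Group G] (h : IsPolycyclic (G ⧸ Subgroup.center G)) :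
    IsPolycyclic ↥(commutator G) :=
  isPolycyclic_commutator_of_ker_le_center (QuotientGroup.mk' _) (QuotientGroup.ker_mk' _).le h
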